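/- Let μ be a weight measure over a finite alphabet Σ with values in a linearly ordered cancellative commutative monoid A and let w ∈ Σ*. Then w is μ-prefix normal if and only if for every factor v of w one has minpos_{w,μ}(μ(v)) ≤ |v|, where minpos_{w,μ}(x) = min{ k ∈ {0,…,|w|} : p_{w,μ}(k) ≥ x } (which is well defined for x = μ(v) since μ(v) ≤ μ(w)). -/

import Mathlib

/-- The weight of a word: the product of the weights of its letters. -/
def weight {α A : Type*} [CommMonoid A] [LinearOrder A] [IsOrderedCancelMonoid A] (μ : α → A) (w : List α) : A :=
  (w.map μ).prod

/-- The factor-weight function: `factorWeight μ w i` is the maximum weight of a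
length-`i` factor (contiguous subword) of `w`. -/
def factorWeight {α A : Type*} [CommMonoid A] [LinearOrder A] [IsOrderedCancelMonoid A] (μ : α → A)
    (w : List α) (i : ℕ) : A :=
  ((List.range (w.length + 1 - i)).map fun j => weight μ ((w.drop j).take i)).foldr max 1

/-- A word is `μ`-prefix normal if its factor-weight function agrees with its
prefix-weight function. -/
def PrefixNormal {α A : Type*} [CommMonoid A] [LinearOrder A] [IsOrderedCancelMonoid A] (μ : α → A)
    (w : List α) : Prop :=
  ∀ i ≤ w.length, factorWeight μ w i = weight μ (w.take i)

/-- A weight measure is gapfree if for every word `w` and every `1 ≤ i ≤ |w|` there is a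
letter `a` with `f_{w,μ}(i) = f_{w,μ}(i-1) * μ a`. -/
def Gapfree {α A : Type*} [CommMonoid A] [LinearOrder A] [IsOrderedCancelMonoid A] (μ : α → A) : Prop :=
  ∀ w : List α, ∀ i, 1 ≤ i → i ≤ w.length →
    ∃ a : α, factorWeight μ w i = factorWeight μ w (i - 1) * μ a

/-- `pnClass μ w` is the set `P_μ(w)` of words that are factor-weight equivalent to `w`
and `μ`-prefix normal. -/
def pnClass {α A : Type*} [CommMonoid A] [LinearOrder A] [IsOrderedCancelMonoid A] (μ : α → A)
    (w : List α) : Set (List α) :=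
  {v | (∀ i, factorWeight μ v i = factorWeight μ w i) ∧ PrefixNormal μ v}

/-- The min-position function: `minpos μ w x = min { k ∈ {0,…,|w|} : p_{w,μ}(k) ≥ x }`. -/
noncomputable def minpos {α A : Type*} [CommMonoid A] [LinearOrder A] [IsOrderedCancelMonoid A] (μ : α → A)
    (w : List α) (x : A) : ℕ :=
  sInf {k | k ≤ w.length ∧ x ≤ weight μ (w.take k)}

/-!
Letter weights are at least `1`, so prefix weights grow with the length of the prefix and,
for `x ≤ μ(w)`, `minpos μ w x ≤ k` says exactly that `x ≤ p_{w,μ}(k)`. Prefix normality says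
that every factor weighs at most the prefix of the same length, which is therefore the
condition `minpos μ w (μ v) ≤ |v|`.
-/

theorem List.foldr_max_le {A : Type*} [LinearOrder A] {l : List A} {b c : A} (hb : b ≤ c)
    (h : ∀ x ∈ l, x ≤ c) : l.foldr max b ≤ c := by
  induction l with
  | nil => exact hb
  | cons x l ih =>
    exact max_le (h x List.mem_cons_self) (ih fun y hy => h y (List.mem_cons_of_mem x hy))

section Weight

variable {α A : Type*} [CommMonoid A] [LinearOrder A] [IsOrderedCancelMonoid A] {μ : α → A}

theorem one_le_weight (hμ : ∀ a, 1 ≤ μ a) (u : List α) : 1 ≤ weight μ u :=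
  List.one_le_prod_of_one_le (List.forall_mem_map.2 fun a _ => hμ a)

theorem weight_le_of_infix (hμ : ∀ a, 1 ≤ μ a) {u v : List α} (h : v <:+: u) :
    weight μ v ≤ weight μ u :=
  (h.sublist.map μ).prod_le_prod' (List.forall_mem_map.2 fun a _ => hμ a)

theorem weight_take_mono (hμ : ∀ a, 1 ≤ μ a) (w : List α) {k i : ℕ} (h : k ≤ i) :
    weight μ (w.take k) ≤ weight μ (w.take i) :=
  weight_le_of_infix hμ (List.take_prefix_take_left h).isInfix

theorem le_factorWeight_of_infix {v w : List α} (h : v <:+: w) :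
    weight μ v ≤ factorWeight μ w v.length := by
  obtain ⟨s, t, rfl⟩ := h
  have hs : s.length < (s ++ v ++ t).length + 1 - v.length := by
    simp only [List.length_append]
    omega
  refine List.le_max_of_le' 1 (List.mem_map_of_mem (List.mem_range.2 hs)) ?_
  rw [List.append_assoc, List.drop_left, List.take_left]

theorem factorWeight_le {w : List α} {i : ℕ} {b : A} (hb : 1 ≤ b)
    (h : ∀ v, v <:+: w → v.length = i → weight μ v ≤ b) : factorWeight μ w i ≤ b := by
  refine List.foldr_max_le hb fun x hx => ?_
  obtain ⟨j, hj, rfl⟩ := List.mem_map.1 hx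
  rw [List.mem_range] at hj
  refine h _ (((w.drop j).take_prefix i).isInfix.trans (w.drop_suffix j).isInfix) ?_
  simp only [List.length_take, List.length_drop]
  omega

theorem prefixNormal_iff_forall_infix (hμ : ∀ a, 1 ≤ μ a) {w : List α} :
    PrefixNormal μ w ↔ ∀ v, v <:+: w → weight μ v ≤ weight μ (w.take v.length) := by
  constructor
  · exact fun h v hv => h v.length hv.length_le ▸ le_factorWeight_of_infix hv
  · intro h i hi
    refine le_antisymm (factorWeight_le (one_le_weight hμ _) fun v hv hlen => hlen ▸ h v hv) ?_
    simpa [min_eq_left hi] using le_factorWeight_of_infix (w.take_prefix i).isInfix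

theorem minpos_le_iff (hμ : ∀ a, 1 ≤ μ a) {w : List α} {x : A} {k : ℕ} (hx : x ≤ weight μ w) :
    minpos μ w x ≤ k ↔ x ≤ weight μ (w.take k) := by
  have hmem : minpos μ w x ∈ {k | k ≤ w.length ∧ x ≤ weight μ (w.take k)} :=
    Nat.sInf_mem ⟨w.length, le_rfl, by rwa [List.take_length]⟩
  refine ⟨fun hk => hmem.2.trans (weight_take_mono hμ w hk), fun hk => ?_⟩
  rcases le_total k w.length with hkw | hwk
  · exact Nat.sInf_le ⟨hkw, hk⟩
  · exact hmem.1.trans hwk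

end Weight

theorem prefixNormal_iff_minpos_general {α A : Type*}
    [CommMonoid A] [LinearOrder A] [IsOrderedCancelMonoid A] (μ : α → A) (hμ : ∀ a : α, 1 < μ a)
    (w : List α) :
    PrefixNormal μ w ↔ ∀ v : List α, v <:+: w → minpos μ w (weight μ v) ≤ v.length := by
  have hμ' : ∀ a, 1 ≤ μ a := fun a => (hμ a).le
  rw [prefixNormal_iff_forall_infix hμ']
  exact forall₂_congr fun v hv => (minpos_le_iff hμ' (weight_le_of_infix hμ' hv)).symm

/-- A word is `μ`-prefix normal iff for every factor `v` of `w` one has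
`minpos_{w,μ}(μ(v)) ≤ |v|`. -/
theorem prefixNormal_iff_minpos {α A : Type*} [Fintype α]
    [CommMonoid A] [LinearOrder A] [IsOrderedCancelMonoid A] (μ : α → A) (hμ : ∀ a : α, 1 < μ a)
    (w : List α) :
    PrefixNormal μ w ↔ ∀ v : List α, v <:+: w → minpos μ w (weight μ v) ≤ v.length :=
  prefixNormal_iff_minpos_general μ hμ w
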